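/- Let F : (0,∞) → ℝ be differentiable with σ_F(x) := sup_{y ≥ x} |F(y)| finite for all x > 0 and |F'| integrable; set σ_{1F}(x) := ∫_x^∞ σ_F(y) dy, σ_{2F}(x) := ∫_x^∞ |F'(y)| dy. Let 0 ≤ δ < 1 and x ≥ 0 with σ_{1F}(2x) ≤ δ. Suppose A(x,·) is bounded and satisfies the Marchenko equation for y ≥ x with sup_{y≥x}|A(x,y)| ≤ σ_F(2x)/(1−δ), a function A_x(x,·) satisfies ∫_x^∞ |A_x(x,s)| ds ≤ (1−δ)^{-1}[σ_{2F}(2x) + (1−δ)^{-1} σ_F(2x) σ_{1F}(2x)], and the diagonal derivative identity Ȧ(x,x) = −2F'(2x) + A(x,x)F(2x) − ∫_x^∞ A_x(x,s) F(x+s) ds − ∫_x^∞ A(x,s) F'(s+x) ds holds, where Ȧ(x,x) := d/dx [A(x,x)]. Then there is a constant c > 0 depending only on δ such that |Ȧ(x,x)| ≤ 2|F'(2x)| + c σ_F(2x)² + c σ_F(2x) σ_{2F}(2x) + c σ_{1F}(2x) σ_F(2x)². -/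

import Mathlib

/-!
Write `Ȧ(x,x)` by the diagonal identity and bound its four terms separately: on `[x, ∞)` we have
`|A| ≤ (1-δ)⁻¹ σ_F(2x)`, on `[2x, ∞)` we have `|F| ≤ σ_F(2x)`, and the integral against `F'(·+x)`
becomes `σ_{2F}(2x)` after translation. The supremum `σ_F(2x)` really bounds `|F|` (it is not the
junk `sSup` of an unbounded set), also for `x = 0`, because `F` is bounded on `[0, ∞)`: the fundamental theorem of calculus with `F'`
integrable controls `F` on `(0, ∞)`. Collecting terms gives `c = (1-δ)⁻¹ (2 + (1-δ)⁻¹)`.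
-/

open MeasureTheory Set Filter

/-- `σ_F(x) := sup_{y ≥ x} |F(y)|`. -/
noncomputable def sigmaF (F : ℝ → ℝ) (x : ℝ) : ℝ :=
  sSup ((fun y => |F y|) '' Set.Ici x)

theorem sigmaF_nonneg (F : ℝ → ℝ) (x : ℝ) : 0 ≤ sigmaF F x :=
  Real.sSup_nonneg (by rintro _ ⟨y, _, rfl⟩; exact abs_nonneg _)

theorem abs_le_sigmaF {F : ℝ → ℝ} {x y : ℝ} (hF : BddAbove ((fun y => |F y|) '' Ici x))
    (hxy : x ≤ y) : |F y| ≤ sigmaF F x :=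
  le_csSup hF ⟨y, hxy, rfl⟩

theorem abs_add_sub_sub_le (a b c d : ℝ) : |a + b - c - d| ≤ |a| + |b| + |c| + |d| := by
  linarith [abs_sub (a + b - c) d, abs_sub (a + b) c, abs_add_le a b]

theorem setIntegral_Ioi_comp_add_right {E : Type*} [NormedAddCommGroup E] [NormedSpace ℝ E]
    (f : ℝ → E) (a b : ℝ) :
    ∫ t in Ioi a, f (t + b) = ∫ y in Ioi (a + b), f y := by
  have h := (measurePreserving_add_right volume b).setIntegral_preimage_emb
    (MeasurableEquiv.addRight b).measurableEmbedding f (Ioi (a + b))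
  rwa [preimage_add_const_Ioi, add_sub_cancel_right] at h

theorem IntegrableOn.comp_add_right_Ioi {E : Type*} [NormedAddCommGroup E] {f : ℝ → E} {a b : ℝ}
    (hf : IntegrableOn f (Ioi (a + b))) : IntegrableOn (fun t => f (t + b)) (Ioi a) := by
  have h := (measurePreserving_add_right volume b).integrableOn_comp_preimage
    (MeasurableEquiv.addRight b).measurableEmbedding (f := f) (s := Ioi (a + b))
  rw [preimage_add_const_Ioi, add_sub_cancel_right] at h
  exact h.2 hf

theorem abs_setIntegral_mul_le {f g : ℝ → ℝ} {s : Set ℝ} {C : ℝ} (hs : MeasurableSet s)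
    (hg : IntegrableOn g s) (hf : ∀ t ∈ s, |f t| ≤ C) :
    |∫ t in s, f t * g t| ≤ C * ∫ t in s, |g t| := by
  have hbound : ∀ᵐ t ∂volume.restrict s, ‖f t * g t‖ ≤ C * |g t| :=
    (ae_restrict_iff' hs).2 <| ae_of_all _ fun t ht => by
      rw [Real.norm_eq_abs, abs_mul]
      exact mul_le_mul_of_nonneg_right (hf t ht) (abs_nonneg _)
  rw [← integral_const_mul]
  exact norm_integral_le_of_norm_le (hg.abs.const_mul C) hbound

theorem abs_setIntegral_Ioi_mul_comp_add_right_le {f g : ℝ → ℝ} {a b C : ℝ}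
    (hg : IntegrableOn g (Ioi (a + b))) (hf : ∀ t > a, |f t| ≤ C) :
    |∫ t in Ioi a, f t * g (t + b)| ≤ C * ∫ y in Ioi (a + b), |g y| := by
  rw [← setIntegral_Ioi_comp_add_right (fun y => |g y|)]
  exact abs_setIntegral_mul_le measurableSet_Ioi (IntegrableOn.comp_add_right_Ioi hg) hf

section IntegrableDerivative

variable {F F' : ℝ → ℝ} {a : ℝ}

theorem integrableOn_of_hasDerivAt_of_integrableOn_abs (hF : ∀ t > a, HasDerivAt F (F' t) t)
    (hF' : IntegrableOn (fun t => |F' t|) (Ioi a)) : IntegrableOn F' (Ioi a) := by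
  have hmeas : AEStronglyMeasurable F' (volume.restrict (Ioi a)) :=
    (measurable_deriv F).aestronglyMeasurable.congr <|
      (ae_restrict_iff' measurableSet_Ioi).2 (ae_of_all _ fun t ht => (hF t ht).deriv)
  exact hF'.mono' hmeas (ae_of_all _ fun t => le_rfl)

theorem abs_sub_le_integral_abs_of_hasDerivAt (hF : ∀ t > a, HasDerivAt F (F' t) t)
    (hF' : IntegrableOn F' (Ioi a)) {y z : ℝ} (hay : a < y) (hyz : y ≤ z) :
    |F z - F y| ≤ ∫ t in Ioi a, |F' t| := by
  have hIoc : Ioc y z ⊆ Ioi a := fun t ht => hay.trans ht.1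
  have hFTC : ∫ t in y..z, F' t = F z - F y :=
    intervalIntegral.integral_eq_sub_of_hasDerivAt
      (fun t ht => hF t (hay.trans_le (by rw [uIcc_of_le hyz] at ht; exact ht.1)))
      ((intervalIntegrable_iff_integrableOn_Ioc_of_le hyz).2 (hF'.mono_set hIoc))
  calc |F z - F y| = |∫ t in y..z, F' t| := by rw [hFTC]
    _ ≤ ∫ t in y..z, |F' t| := intervalIntegral.abs_integral_le_integral_abs hyz
    _ ≤ ∫ t in Ioi a, |F' t| := by
      rw [intervalIntegral.integral_of_le hyz]
      exact setIntegral_mono_set hF'.abs (ae_of_all _ fun t => abs_nonneg _)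
        hIoc.eventuallyLE

theorem bddAbove_abs_image_Ici_of_hasDerivAt (hF : ∀ t > a, HasDerivAt F (F' t) t)
    (hF' : IntegrableOn (fun t => |F' t|) (Ioi a)) {x : ℝ} (hax : a ≤ x) :
    BddAbove ((fun y => |F y|) '' Ici x) := by
  have hF'int := integrableOn_of_hasDerivAt_of_integrableOn_abs hF hF'
  refine ⟨max |F a| (|F (a + 1)| + ∫ t in Ioi a, |F' t|), ?_⟩
  rintro _ ⟨y, hxy, rfl⟩
  rcases (hax.trans hxy).eq_or_lt with rfl | hay
  · exact le_max_left _ _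
  have hdiff : |F y - F (a + 1)| ≤ ∫ t in Ioi a, |F' t| := by
    rcases le_total y (a + 1) with hy1 | hy1
    · rw [abs_sub_comm]
      exact abs_sub_le_integral_abs_of_hasDerivAt hF hF'int hay hy1
    · exact abs_sub_le_integral_abs_of_hasDerivAt hF hF'int (by linarith) hy1
  exact le_max_of_le_right (by linarith [abs_sub_abs_le_abs_sub (F y) (F (a + 1))])

end IntegrableDerivative

theorem marchenko_diagonal_derivative_bound_general
    (δ : ℝ) (hδ1 : δ < 1) :
    ∃ c > (0 : ℝ), ∀ (F F' A Ax : ℝ → ℝ) (x : ℝ) (Adot : ℝ),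
      (∀ y > (0 : ℝ), HasDerivAt F (F' y) y) →
      Measurable F →
      (∀ x' > (0 : ℝ), BddAbove ((fun y => |F y|) '' Set.Ici x')) →
      IntegrableOn (fun y => |F' y|) (Set.Ioi 0) →
      0 ≤ x →
      IntegrableOn (sigmaF F) (Set.Ioi (2 * x)) →
      (∫ y in Set.Ioi (2 * x), sigmaF F y) ≤ δ →
      Measurable A →
      BddAbove ((fun y => |A y|) '' Set.Ici x) →
      (∀ y ≥ x, A y + ∫ t in Set.Ioi x, A t * F (t + y) = -F (x + y)) →
      sSup ((fun y => |A y|) '' Set.Ici x) ≤ sigmaF F (2 * x) / (1 - δ) →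
      IntegrableOn Ax (Set.Ioi x) →
      (∫ s in Set.Ioi x, |Ax s|) ≤
        (1 - δ)⁻¹ * ((∫ y in Set.Ioi (2 * x), |F' y|) +
          (1 - δ)⁻¹ * sigmaF F (2 * x) * (∫ y in Set.Ioi (2 * x), sigmaF F y)) →
      (Adot = -2 * F' (2 * x) + A x * F (2 * x)
        - (∫ s in Set.Ioi x, Ax s * F (x + s))
        - (∫ s in Set.Ioi x, A s * F' (s + x))) →
      |Adot| ≤ 2 * |F' (2 * x)| + c * (sigmaF F (2 * x)) ^ 2
        + c * sigmaF F (2 * x) * (∫ y in Set.Ioi (2 * x), |F' y|)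
        + c * (∫ y in Set.Ioi (2 * x), sigmaF F y) * (sigmaF F (2 * x)) ^ 2 := by
  set e := (1 - δ)⁻¹
  have he : 0 < e := inv_pos.2 (sub_pos.2 hδ1)
  refine ⟨2 * e + e ^ 2, by positivity, ?_⟩
  intro F F' A Ax x Adot hF' _ _ hF'int hx _ _ _ hAbdd _ hAsup hAxint hAxbound hAdot
  set s := sigmaF F (2 * x)
  set S1 := ∫ y in Ioi (2 * x), sigmaF F y
  set S2 := ∫ y in Ioi (2 * x), |F' y|
  have hFs : ∀ y ≥ 2 * x, |F y| ≤ s := fun y hy =>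
    abs_le_sigmaF (bddAbove_abs_image_Ici_of_hasDerivAt hF' hF'int (by linarith)) hy
  have hAs : ∀ y ≥ x, |A y| ≤ e * s := fun y hy =>
    (le_csSup hAbdd ⟨y, hy, rfl⟩).trans (by rw [mul_comm]; exact hAsup)
  have hs : 0 ≤ s := sigmaF_nonneg F _
  have hI1 : |∫ t in Ioi x, Ax t * F (x + t)| ≤ s * (e * (S2 + e * s * S1)) := by
    simp_rw [mul_comm (Ax _)]
    refine (abs_setIntegral_mul_le measurableSet_Ioi hAxint fun t ht => ?_).trans
      (mul_le_mul_of_nonneg_left hAxbound hs)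
    exact hFs _ (by linarith [mem_Ioi.1 ht])
  have hI2 : |∫ t in Ioi x, A t * F' (t + x)| ≤ e * s * S2 := by
    have hF'int2 : IntegrableOn F' (Ioi (x + x)) :=
      (integrableOn_of_hasDerivAt_of_integrableOn_abs hF' hF'int).mono_set
        (Ioi_subset_Ioi (by linarith))
    have h := abs_setIntegral_Ioi_mul_comp_add_right_le hF'int2 fun t ht => hAs t ht.le
    rwa [← two_mul] at h
  have hS1 : 0 ≤ S1 := integral_nonneg fun y => sigmaF_nonneg F y
  have hS2 : 0 ≤ S2 := integral_nonneg fun y => abs_nonneg _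
  calc |Adot| ≤ |-2 * F' (2 * x)| + |A x * F (2 * x)|
        + |∫ t in Ioi x, Ax t * F (x + t)| + |∫ t in Ioi x, A t * F' (t + x)| :=
        hAdot ▸ abs_add_sub_sub_le _ _ _ _
    _ ≤ 2 * |F' (2 * x)| + e * s * s + s * (e * (S2 + e * s * S1)) + e * s * S2 := by
        rw [abs_mul, abs_neg, abs_two, abs_mul]
        gcongr
        exacts [hAs x le_rfl, hFs _ le_rfl]
    _ = 2 * |F' (2 * x)| + e * s ^ 2 + 2 * e * s * S2 + e ^ 2 * S1 * s ^ 2 := by ring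
    _ ≤ 2 * |F' (2 * x)| + (2 * e + e ^ 2) * s ^ 2 + (2 * e + e ^ 2) * s * S2
        + (2 * e + e ^ 2) * S1 * s ^ 2 := by
        gcongr <;> nlinarith

/-- bound on the diagonal derivative `Ȧ(x,x)` of the Marchenko kernel:
there is a constant `c > 0` depending only on `δ` such that
`|Ȧ(x,x)| ≤ 2|F'(2x)| + c σ_F(2x)² + c σ_F(2x) σ_{2F}(2x) + c σ_{1F}(2x) σ_F(2x)²`. -/
theorem marchenko_diagonal_derivative_bound
    (δ : ℝ) (hδ0 : 0 ≤ δ) (hδ1 : δ < 1) :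
    ∃ c > (0 : ℝ), ∀ (F F' A Ax : ℝ → ℝ) (x : ℝ) (Adot : ℝ),
      (∀ y > (0 : ℝ), HasDerivAt F (F' y) y) →
      Measurable F →
      (∀ x' > (0 : ℝ), BddAbove ((fun y => |F y|) '' Set.Ici x')) →
      IntegrableOn (fun y => |F' y|) (Set.Ioi 0) →
      0 ≤ x →
      IntegrableOn (sigmaF F) (Set.Ioi (2 * x)) →
      (∫ y in Set.Ioi (2 * x), sigmaF F y) ≤ δ →
      Measurable A →
      BddAbove ((fun y => |A y|) '' Set.Ici x) →
      (∀ y ≥ x, A y + ∫ t in Set.Ioi x, A t * F (t + y) = -F (x + y)) →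
      sSup ((fun y => |A y|) '' Set.Ici x) ≤ sigmaF F (2 * x) / (1 - δ) →
      IntegrableOn Ax (Set.Ioi x) →
      (∫ s in Set.Ioi x, |Ax s|) ≤
        (1 - δ)⁻¹ * ((∫ y in Set.Ioi (2 * x), |F' y|) +
          (1 - δ)⁻¹ * sigmaF F (2 * x) * (∫ y in Set.Ioi (2 * x), sigmaF F y)) →
      (Adot = -2 * F' (2 * x) + A x * F (2 * x)
        - (∫ s in Set.Ioi x, Ax s * F (x + s))
        - (∫ s in Set.Ioi x, A s * F' (s + x))) →
      |Adot| ≤ 2 * |F' (2 * x)| + c * (sigmaF F (2 * x)) ^ 2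
        + c * sigmaF F (2 * x) * (∫ y in Set.Ioi (2 * x), |F' y|)
        + c * (∫ y in Set.Ioi (2 * x), sigmaF F y) * (sigmaF F (2 * x)) ^ 2 :=
  marchenko_diagonal_derivative_bound_general δ hδ1
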